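/- arXiv:2403.13388 — 3 statements merged into one kernel-verified Lean document; each statement's English description precedes it below -/
import Mathlib

section
/- Fix 0 < γ < 1, λ > 0 and y > 0. The equation (1-γ)(x/γ)^{γ/(γ-1)} - yx + λy^γ = 0 has a unique positive solution x = f_λ(y), and moreover f_λ(y) = d·y^{γ-1} where d = γs^{γ-1} and s > 0 is the unique positive solution of (1-γ)s^γ - γs^{γ-1} + λ = 0. -/
open Real

private lemma gmono {γ lam : ℝ} (hγ0 : 0 < γ) (hγ1 : γ < 1) :
    ∀ a b : ℝ, 0 < a → a < b →
      (1 - γ) * a ^ γ - γ * a ^ (γ - 1) + lam < (1 - γ) * b ^ γ - γ * b ^ (γ - 1) + lam := by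
  intro a b ha hab
  have h1 : a ^ γ < b ^ γ := Real.rpow_lt_rpow ha.le hab hγ0
  have h2 : b ^ (γ - 1) < a ^ (γ - 1) := Real.rpow_lt_rpow_of_neg ha hab (by linarith)
  have h3 : (1 - γ) * a ^ γ < (1 - γ) * b ^ γ :=
    mul_lt_mul_of_pos_left h1 (by linarith)
  have h4 : γ * b ^ (γ - 1) < γ * a ^ (γ - 1) := mul_lt_mul_of_pos_left h2 hγ0
  linarith

private lemma gexists {γ lam : ℝ} (hγ0 : 0 < γ) (hγ1 : γ < 1) (hlam : 0 < lam) :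
    ∃ s : ℝ, 0 < s ∧ (1 - γ) * s ^ γ - γ * s ^ (γ - 1) + lam = 0 := by
  have hne : γ - 1 ≠ 0 := by linarith
  set a : ℝ := ((1 + lam) / γ) ^ (1 / (γ - 1)) with ha_def
  have hC1 : 1 < (1 + lam) / γ := by
    rw [lt_div_iff₀ hγ0]; linarith
  have hC0 : (0:ℝ) < (1 + lam) / γ := by linarith
  have ha0 : 0 < a := Real.rpow_pos_of_pos hC0 _
  have ha1 : a < 1 := Real.rpow_lt_one_of_one_lt_of_neg hC1
    (by
      apply div_neg_of_pos_of_neg one_pos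
      linarith)
  have haγ1 : a ^ (γ - 1) = (1 + lam) / γ := by
    rw [ha_def, ← Real.rpow_mul hC0.le, one_div_mul_cancel hne, Real.rpow_one]
  have hga : (1 - γ) * a ^ γ - γ * a ^ (γ - 1) + lam < 0 := by
    have haγ : a ^ γ < 1 := Real.rpow_lt_one ha0.le ha1 hγ0
    rw [haγ1]
    have : γ * ((1 + lam) / γ) = 1 + lam := by field_simp
    rw [this]
    nlinarith [Real.rpow_pos_of_pos ha0 γ]
  set b : ℝ := max 1 (γ / (1 - γ)) with hb_def
  have hb1 : (1:ℝ) ≤ b := le_max_left _ _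
  have hb0 : (0:ℝ) < b := by linarith
  have hgb : 0 < (1 - γ) * b ^ γ - γ * b ^ (γ - 1) + lam := by
    have hbγ : b ^ γ = b ^ (γ - 1) * b := by
      rw [← Real.rpow_add_one hb0.ne' (γ - 1)]
      congr 1
      ring
    have hb2 : γ / (1 - γ) ≤ b := le_max_right _ _
    have hb3 : γ ≤ (1 - γ) * b := by
      rw [div_le_iff₀ (by linarith : (0:ℝ) < 1 - γ)] at hb2
      linarith [hb2]
    have hbp : 0 < b ^ (γ - 1) := Real.rpow_pos_of_pos hb0 _
    have : 0 ≤ b ^ (γ - 1) * ((1 - γ) * b - γ) :=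
      mul_nonneg hbp.le (by linarith)
    calc (0:ℝ) < lam := hlam
      _ ≤ b ^ (γ - 1) * ((1 - γ) * b - γ) + lam := by linarith
      _ = (1 - γ) * b ^ γ - γ * b ^ (γ - 1) + lam := by rw [hbγ]; ring
  have hab : a ≤ b := le_trans ha1.le hb1
  have hcont : ContinuousOn
      (fun s : ℝ => (1 - γ) * s ^ γ - γ * s ^ (γ - 1) + lam) (Set.Icc a b) := by
    have hne0 : ∀ x ∈ Set.Icc a b, x ≠ 0 ∨ (0:ℝ) ≤ γ := fun x hx =>
      Or.inl (ne_of_gt (lt_of_lt_of_le ha0 hx.1))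
    have hne0' : ∀ x ∈ Set.Icc a b, x ≠ 0 ∨ (0:ℝ) ≤ γ - 1 := fun x hx =>
      Or.inl (ne_of_gt (lt_of_lt_of_le ha0 hx.1))
    exact (((continuousOn_id.rpow_const hne0).const_smul (1 - γ)).sub
      ((continuousOn_id.rpow_const hne0').const_smul γ)).add continuousOn_const
  have hmem : (0:ℝ) ∈ Set.Icc ((1 - γ) * a ^ γ - γ * a ^ (γ - 1) + lam)
      ((1 - γ) * b ^ γ - γ * b ^ (γ - 1) + lam) := ⟨hga.le, hgb.le⟩
  obtain ⟨s, hs, hgs⟩ := intermediate_value_Icc hab hcont hmem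
  exact ⟨s, lt_of_lt_of_le ha0 hs.1, hgs⟩

private lemma transform {γ lam y s : ℝ} (hγ0 : 0 < γ) (hγ1 : γ < 1) (hy : 0 < y) (hs : 0 < s) :
    (1 - γ) * ((γ * (s * y) ^ (γ - 1)) / γ) ^ (γ / (γ - 1)) - y * (γ * (s * y) ^ (γ - 1))
      + lam * y ^ γ
      = y ^ γ * ((1 - γ) * s ^ γ - γ * s ^ (γ - 1) + lam) := by
  have hsy : 0 < s * y := mul_pos hs hy
  have hne : γ - 1 ≠ 0 := by linarith
  have h1 : (γ * (s * y) ^ (γ - 1)) / γ = (s * y) ^ (γ - 1) := by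
    field_simp
  have h2 : ((s * y) ^ (γ - 1)) ^ (γ / (γ - 1)) = (s * y) ^ γ := by
    rw [← Real.rpow_mul hsy.le]
    congr 1
    field_simp
  have hyy : y ^ (γ - 1) * y = y ^ γ := by
    rw [← Real.rpow_add_one hy.ne' (γ - 1)]
    congr 1
    ring
  rw [h1, h2, Real.mul_rpow hs.le hy.le, Real.mul_rpow hs.le hy.le]
  linear_combination (-(γ * s ^ (γ - 1))) * hyy

/-- the equation `(1-γ)(x/γ)^{γ/(γ-1)} - yx + λy^γ = 0` has a unique
positive solution `f_λ(y)`, and it equals `d·y^{γ-1}` with `d = γ s^{γ-1}` where `s`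
is the unique positive solution of `(1-γ)s^γ - γ s^{γ-1} + λ = 0`. -/
theorem stmt_1 (γ lam y : ℝ) (hγ0 : 0 < γ) (hγ1 : γ < 1) (hlam : 0 < lam) (hy : 0 < y) :
    (∃! x : ℝ, 0 < x ∧ (1 - γ) * (x / γ) ^ (γ / (γ - 1)) - y * x + lam * y ^ γ = 0) ∧
    (∃! s : ℝ, 0 < s ∧ (1 - γ) * s ^ γ - γ * s ^ (γ - 1) + lam = 0) ∧
    (∀ s : ℝ, 0 < s → (1 - γ) * s ^ γ - γ * s ^ (γ - 1) + lam = 0 →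
      ∀ x : ℝ, 0 < x → (1 - γ) * (x / γ) ^ (γ / (γ - 1)) - y * x + lam * y ^ γ = 0 →
        x = (γ * s ^ (γ - 1)) * y ^ (γ - 1)) := by
  have hne : γ - 1 ≠ 0 := by linarith
  have hyγ : 0 < y ^ γ := Real.rpow_pos_of_pos hy γ
  obtain ⟨s₀, hs₀, hgs₀⟩ := gexists hγ0 hγ1 hlam
  -- uniqueness of s roots
  have suniq : ∀ s : ℝ, 0 < s → (1 - γ) * s ^ γ - γ * s ^ (γ - 1) + lam = 0 →
      ∀ t : ℝ, 0 < t → (1 - γ) * t ^ γ - γ * t ^ (γ - 1) + lam = 0 → t = s := by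
    intro s hs hgs t ht hgt
    rcases lt_trichotomy t s with h | h | h
    · exact absurd (hgt ▸ hgs ▸ gmono (lam := lam) hγ0 hγ1 t s ht h) (lt_irrefl 0)
    · exact h
    · exact absurd (hgs ▸ hgt ▸ gmono (lam := lam) hγ0 hγ1 s t hs h) (lt_irrefl 0)
  -- part 3
  have h3 : ∀ s : ℝ, 0 < s → (1 - γ) * s ^ γ - γ * s ^ (γ - 1) + lam = 0 →
      ∀ x : ℝ, 0 < x → (1 - γ) * (x / γ) ^ (γ / (γ - 1)) - y * x + lam * y ^ γ = 0 →
        x = (γ * s ^ (γ - 1)) * y ^ (γ - 1) := by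
    intro s hs hgs x hx hFx
    -- represent x as γ*(t*y)^(γ-1)
    set t : ℝ := (x / γ) ^ (1 / (γ - 1)) / y with ht_def
    have hxγ : 0 < x / γ := div_pos hx hγ0
    have ht0 : 0 < t := div_pos (Real.rpow_pos_of_pos hxγ _) hy
    have hty : t * y = (x / γ) ^ (1 / (γ - 1)) := by
      rw [ht_def]; field_simp
    have hxt : x = γ * (t * y) ^ (γ - 1) := by
      rw [hty, ← Real.rpow_mul hxγ.le, one_div_mul_cancel hne, Real.rpow_one]
      field_simp
    have htrans := transform (lam := lam) hγ0 hγ1 hy ht0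
    rw [← hxt] at htrans
    rw [htrans] at hFx
    have hgt : (1 - γ) * t ^ γ - γ * t ^ (γ - 1) + lam = 0 := by
      rcases mul_eq_zero.1 hFx with h | h
      · exact absurd h hyγ.ne'
      · exact h
    have hts : t = s := suniq s hs hgs t ht0 hgt
    rw [hxt, hts, Real.mul_rpow hs.le hy.le, mul_assoc]
  refine ⟨?_, ⟨s₀, ⟨hs₀, hgs₀⟩, fun t ht => suniq s₀ hs₀ hgs₀ t ht.1 ht.2⟩, h3⟩
  -- part 1
  refine ⟨γ * (s₀ * y) ^ (γ - 1), ⟨?_, ?_⟩, ?_⟩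
  · exact mul_pos hγ0 (Real.rpow_pos_of_pos (mul_pos hs₀ hy) _)
  · rw [transform (lam := lam) hγ0 hγ1 hy hs₀, hgs₀, mul_zero]
  · intro x' hx'
    have := h3 s₀ hs₀ hgs₀ x' hx'.1 hx'.2
    rw [this, Real.mul_rpow hs₀.le hy.le, mul_assoc]
end

section
/- Let 0 < γ < 1, λ > 0, y > 0, z > 0, and define u_λ(c,y) = (c-y)^γ if c > y and u_λ(c,y) = -λ(y-c)^γ if 0 ≤ c ≤ y. Then the set of maximizers of c ↦ u_λ(c,y) - cz over c ∈ [0,∞) equals: {0} if z > f_λ(y); {(z/γ)^{1/(γ-1)} + y} if z < f_λ(y); and {0, (z/γ)^{1/(γ-1)} + y} if z = f_λ(y), where f_λ(y) is the unique positive solution of (1-γ)(x/γ)^{γ/(γ-1)} - yx + λy^γ = 0. -/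
private lemma key_ineq {γ z t s : ℝ} (hγ0 : 0 < γ) (hγ1 : γ < 1) (ht : 0 < t)
    (hzt : z = γ * t ^ (γ - 1)) (hs : 0 ≤ s) (hne : s ≠ t) :
    s ^ γ - z * s < t ^ γ - z * t := by
  have hrne : s / t ≠ 1 := by
    intro h
    apply hne
    field_simp at h
    linarith
  have hb := rpow_one_add_lt_one_add_mul_self (s := s / t - 1)
    (by have := div_nonneg hs ht.le; linarith)
    (by intro h; apply hrne; linarith) hγ0 hγ1
  rw [show (1 + (s / t - 1)) = s / t by ring] at hb
  have htγ : (0:ℝ) < t ^ γ := Real.rpow_pos_of_pos ht γ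
  have h1 : (s / t) ^ γ = s ^ γ / t ^ γ := Real.div_rpow hs ht.le γ
  have htt : t ^ γ = t ^ (γ - 1) * t := by
    rw [← Real.rpow_add_one ht.ne']; norm_num
  have h2 : z * t = γ * t ^ γ := by rw [htt, hzt]; ring
  have h3 : z * s = γ * t ^ γ * (s / t) := by
    rw [htt, hzt]; field_simp
  rw [h1] at hb
  have h4 := (div_lt_iff₀ htγ).mp hb
  have h5 : (1 + γ * (s / t - 1)) * t ^ γ = t ^ γ + z * s - z * t := by
    rw [h3, h2]; ring
  linarith

private lemma mid_ineq {γ lam y z c : ℝ} (hγ1 : γ < 1) (hlam : 0 < lam)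
    (hy : 0 < y) (hc0 : 0 < c) (hcy : c < y) :
    -lam * (y - c) ^ γ - c * z < max (-lam * y ^ γ) (-(y * z)) := by
  have hw : 0 < y - c := by linarith
  have hr0 : 0 < (y - c) / y := div_pos hw hy
  have hr1 : (y - c) / y < 1 := (div_lt_one hy).2 (by linarith)
  have h1 : ((y - c) / y) ^ (1:ℝ) < ((y - c) / y) ^ γ :=
    Real.rpow_lt_rpow_of_exponent_gt hr0 hr1 hγ1
  rw [Real.rpow_one] at h1
  have h2 : ((y - c) / y) ^ γ = (y - c) ^ γ / y ^ γ := Real.div_rpow hw.le hy.le γ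
  have hyγ : 0 < y ^ γ := Real.rpow_pos_of_pos hy γ
  have h3 : (y - c) / y * y ^ γ < (y - c) ^ γ := by
    rw [h2] at h1
    calc (y - c) / y * y ^ γ < (y - c) ^ γ / y ^ γ * y ^ γ :=
          mul_lt_mul_of_pos_right h1 hyγ
      _ = (y - c) ^ γ := by field_simp
  have hA := le_max_left (-lam * y ^ γ) (-(y * z))
  have hB := le_max_right (-lam * y ^ γ) (-(y * z))
  set Mx := max (-lam * y ^ γ) (-(y * z)) with hMx
  have key : -lam * (y - c) ^ γ - c * z
      < (y - c) / y * (-lam * y ^ γ) + c / y * (-(y * z)) := by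
    have e1 : c / y * (-(y * z)) = -(c * z) := by field_simp
    rw [e1]
    have h4 := mul_lt_mul_of_pos_left h3 hlam
    nlinarith [h4]
  have hcomb : (y - c) / y * (-lam * y ^ γ) + c / y * (-(y * z)) ≤ Mx := by
    have e : (y - c) / y + c / y = 1 := by field_simp; ring
    calc (y - c) / y * (-lam * y ^ γ) + c / y * (-(y * z))
        ≤ (y - c) / y * Mx + c / y * Mx :=
          add_le_add (mul_le_mul_of_nonneg_left hA hr0.le)
            (mul_le_mul_of_nonneg_left hB (by positivity))
      _ = ((y - c) / y + c / y) * Mx := by ring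
      _ = Mx := by rw [e, one_mul]
  linarith

/-- the set of maximizers of `c ↦ u_λ(c,y) - cz` over `c ∈ [0,∞)`. -/
theorem stmt_3 (γ lam y z x : ℝ) (hγ0 : 0 < γ) (hγ1 : γ < 1) (hlam : 0 < lam)
    (hy : 0 < y) (hz : 0 < z) (hx : 0 < x)
    (hxeq : (1 - γ) * (x / γ) ^ (γ / (γ - 1)) - y * x + lam * y ^ γ = 0) :
    let u : ℝ → ℝ := fun c => if y < c then (c - y) ^ γ else -lam * (y - c) ^ γ
    let M : Set ℝ := {c | 0 ≤ c ∧ ∀ c', 0 ≤ c' → u c' - c' * z ≤ u c - c * z}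
    (x < z → M = {0}) ∧
    (z < x → M = {(z / γ) ^ (1 / (γ - 1)) + y}) ∧
    (z = x → M = {0, (z / γ) ^ (1 / (γ - 1)) + y}) := by
  intro u M
  have hMdef : ∀ c, c ∈ M ↔ 0 ≤ c ∧ ∀ c', 0 ≤ c' → u c' - c' * z ≤ u c - c * z :=
    fun c => Iff.rfl
  have hu : ∀ c, u c = if y < c then (c - y) ^ γ else -lam * (y - c) ^ γ := fun c => rfl
  have hγ1' : γ - 1 < 0 := by linarith
  have hγ1ne : γ - 1 ≠ 0 := ne_of_lt hγ1'
  have h1γ : 0 < 1 - γ := by linarith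
  have hzγ : 0 < z / γ := div_pos hz hγ0
  have hxγ : 0 < x / γ := div_pos hx hγ0
  set t : ℝ := (z / γ) ^ (1 / (γ - 1)) with htdef
  have ht : 0 < t := Real.rpow_pos_of_pos hzγ _
  have ht1 : t ^ (γ - 1) = z / γ := by
    rw [htdef, ← Real.rpow_mul hzγ.le]
    rw [show 1 / (γ - 1) * (γ - 1) = 1 by field_simp, Real.rpow_one]
  have hzt : z = γ * t ^ (γ - 1) := by rw [ht1]; field_simp
  have htγp : t ^ γ = (z / γ) ^ (γ / (γ - 1)) := by
    rw [htdef, ← Real.rpow_mul hzγ.le]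
    congr 1
    field_simp
  have htt : t ^ γ = t ^ (γ - 1) * t := by
    rw [← Real.rpow_add_one ht.ne']; norm_num
  have hzt2 : z * t = γ * t ^ γ := by rw [htt, hzt]; ring
  -- values of u
  have hu0 : u 0 = -lam * y ^ γ := by
    rw [hu 0, if_neg (by linarith)]
    norm_num
  have huc : ∀ c, y ≤ c → u c = (c - y) ^ γ := by
    intro c hc
    rcases lt_or_eq_of_le hc with h | h
    · rw [hu c, if_pos h]
    · rw [hu c, if_neg (by simp [h]), ← h, sub_self, Real.zero_rpow hγ0.ne']
      ring
  have huy : u y = 0 := by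
    rw [huc y le_rfl, sub_self, Real.zero_rpow hγ0.ne']
  have hty : y < t + y := by linarith
  have hustar : u (t + y) = t ^ γ := by
    rw [huc _ hty.le, add_sub_cancel_right]
  -- upper part : for c ≥ y, c ≠ t + y, value is strictly below value at t + y
  have upper : ∀ c, y ≤ c → c ≠ t + y → u c - c * z < u (t + y) - (t + y) * z := by
    intro c hc hne
    rw [huc c hc, hustar]
    have hk := key_ineq hγ0 hγ1 ht hzt (s := c - y) (by linarith)
      (fun h => hne (by linarith))
    linarith
  -- middle part
  have mid : ∀ c, 0 < c → c < y →
      u c - c * z < max (u 0 - 0 * z) (u y - y * z) := by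
    intro c hc0 hcy
    have e1 : u 0 - 0 * z = -lam * y ^ γ := by rw [hu0]; ring
    have e2 : u y - y * z = -(y * z) := by rw [huy]; ring
    rw [e1, e2, hu c, if_neg (by linarith)]
    exact mid_ineq hγ1 hlam hy hc0 hcy
  -- global strict bound
  have globallt : ∀ c, 0 ≤ c → c ≠ 0 → c ≠ t + y →
      u c - c * z < max (u 0 - 0 * z) (u (t + y) - (t + y) * z) := by
    intro c hc hc0 hct
    rcases le_or_gt y c with h | h
    · exact lt_of_lt_of_le (upper c h hct) (le_max_right _ _)
    · have h1 := mid c (lt_of_le_of_ne hc (Ne.symm hc0)) h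
      have h2 : u y - y * z < u (t + y) - (t + y) * z :=
        upper y le_rfl (by intro h; linarith)
      calc u c - c * z < max (u 0 - 0 * z) (u y - y * z) := h1
        _ ≤ max (u 0 - 0 * z) (u (t + y) - (t + y) * z) :=
            max_le_max le_rfl h2.le
  have globalle : ∀ c, 0 ≤ c →
      u c - c * z ≤ max (u 0 - 0 * z) (u (t + y) - (t + y) * z) := by
    intro c hc
    by_cases hc0 : c = 0
    · rw [hc0]; exact le_max_left _ _
    by_cases hct : c = t + y
    · rw [hct]; exact le_max_right _ _
    exact (globallt c hc hc0 hct).le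
  -- the gap formula
  have hgap : u (t + y) - (t + y) * z - (u 0 - 0 * z)
      = (1 - γ) * (z / γ) ^ (γ / (γ - 1)) - y * z + lam * y ^ γ := by
    rw [hustar, hu0, ← htγp]
    linear_combination -hzt2
  refine ⟨?_, ?_, ?_⟩
  · -- case x < z : M = {0}
    intro hxz
    have hmono : (z / γ) ^ (γ / (γ - 1)) < (x / γ) ^ (γ / (γ - 1)) :=
      Real.rpow_lt_rpow_of_neg hxγ (by gcongr)
        (div_neg_of_pos_of_neg hγ0 hγ1')
    have hBA : u (t + y) - (t + y) * z < u 0 - 0 * z := by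
      nlinarith [mul_lt_mul_of_pos_left hmono h1γ]
    have hmaxeq : max (u 0 - 0 * z) (u (t + y) - (t + y) * z) = u 0 - 0 * z :=
      max_eq_left hBA.le
    ext c
    rw [hMdef, Set.mem_singleton_iff]
    constructor
    · rintro ⟨hc, hmax⟩
      by_contra hc0
      have h0 := hmax 0 le_rfl
      by_cases hct : c = t + y
      · rw [hct] at h0; linarith
      · have := globallt c hc hc0 hct
        rw [hmaxeq] at this
        linarith
    · rintro rfl
      exact ⟨le_rfl, fun c' hc' => (globalle c' hc').trans_eq hmaxeq⟩
  · -- case z < x : M = {t + y}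
    intro hzx
    have hmono : (x / γ) ^ (γ / (γ - 1)) < (z / γ) ^ (γ / (γ - 1)) :=
      Real.rpow_lt_rpow_of_neg hzγ (by gcongr)
        (div_neg_of_pos_of_neg hγ0 hγ1')
    have hAB : u 0 - 0 * z < u (t + y) - (t + y) * z := by
      nlinarith [mul_lt_mul_of_pos_left hmono h1γ]
    have hmaxeq : max (u 0 - 0 * z) (u (t + y) - (t + y) * z)
        = u (t + y) - (t + y) * z := max_eq_right hAB.le
    ext c
    rw [hMdef, Set.mem_singleton_iff]
    constructor
    · rintro ⟨hc, hmax⟩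
      by_contra hct
      have h0 := hmax (t + y) (by linarith)
      by_cases hc0 : c = 0
      · rw [hc0] at h0; linarith
      · have := globallt c hc hc0 hct
        rw [hmaxeq] at this
        linarith
    · rintro rfl
      exact ⟨by linarith, fun c' hc' => (globalle c' hc').trans_eq hmaxeq⟩
  · -- case z = x : M = {0, t + y}
    intro hzx
    subst hzx
    have hAB : u 0 - 0 * z = u (t + y) - (t + y) * z := by
      linarith
    have hmaxeq : max (u 0 - 0 * z) (u (t + y) - (t + y) * z) = u 0 - 0 * z :=
      max_eq_left hAB.ge
    ext c
    rw [hMdef, Set.mem_insert_iff, Set.mem_singleton_iff]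
    constructor
    · rintro ⟨hc, hmax⟩
      by_contra hcon
      push_neg at hcon
      obtain ⟨hc0, hct⟩ := hcon
      have h0 := hmax 0 le_rfl
      have := globallt c hc hc0 hct
      rw [hmaxeq] at this
      linarith
    · rintro (rfl | rfl)
      · exact ⟨le_rfl, fun c' hc' => (globalle c' hc').trans_eq hmaxeq⟩
      · exact ⟨by linarith, fun c' hc' =>
          ((globalle c' hc').trans_eq hmaxeq).trans_eq hAB⟩
end

section
/- Let ξ be a positive log-normal random variable, Y ≥ 0 a random benchmark with E[Y^γ·ξ] < ∞, γ ∈ (0,1), λ ≥ 0, and define the demand function X̲_λ(νξ, Y) = [(νξ/γ)^{1/(γ-1)} + Y]·1_{νξ < f_λ(Y)} for ν > 0, where f_λ(y) = d y^{γ-1} with d > 0. Define g(ν) = E[ξ · X̲_λ(νξ, Y)]. Then g(ν) → +∞ as ν → 0+ and g(ν) → 0 as ν → +∞. -/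
open MeasureTheory ProbabilityTheory
open Real Filter

lemma aux_integrable_exp_gaussian (m : ℝ) (v : NNReal) (t : ℝ) :
    Integrable (fun x => Real.exp (t * x)) (gaussianReal m v) := by
  by_cases hv : v = 0
  · subst hv
    rw [gaussianReal_zero_var]
    exact (integrable_const (Real.exp (t * m))).congr
      (ae_eq_dirac (f := fun x => Real.exp (t * x)) (a := m)).symm
  · rw [gaussianReal_of_var_ne_zero _ hv,
      integrable_withDensity_iff (measurable_gaussianPDF _ _)
        (ae_of_all _ fun x => ENNReal.ofReal_lt_top)]
    have hv0 : (0:ℝ) < v := lt_of_le_of_ne v.2 (by exact_mod_cast (Ne.symm hv))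
    set u : ℝ := (v : ℝ) with hu
    set A : ℝ := ((2*u*t + 2*m)^2 - 2*m^2) / (4*u) with hA
    have hmain : Integrable (fun x : ℝ =>
        ((Real.sqrt (2 * Real.pi * u))⁻¹ * Real.exp A) * Real.exp (-(4*u)⁻¹ * x^2)) := by
      exact (integrable_exp_neg_mul_sq (by positivity : (0:ℝ) < (4*u)⁻¹)).const_mul _
    refine hmain.mono' ?_ (ae_of_all _ fun x => ?_)
    · exact ((measurable_const_mul t).exp.mul
        (measurable_gaussianPDF m v).ennreal_toReal).aestronglyMeasurable
    · have hpdf : (gaussianPDF m v x).toReal = gaussianPDFReal m v x := by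
        rw [gaussianPDF_def, ENNReal.toReal_ofReal (gaussianPDFReal_nonneg _ _ _)]
      rw [Real.norm_eq_abs, abs_of_nonneg (by positivity), hpdf, gaussianPDFReal]
      have hineq : -(x-m)^2/(2*u) + t*x ≤ A + -(4*u)⁻¹*x^2 := by
        rw [← sub_nonpos]
        have key : (-(x-m)^2/(2*u) + t*x) - (A + -(4*u)⁻¹*x^2)
            = (-(x - (2*u*t+2*m))^2) / (4*u) := by
          rw [hA]; field_simp; ring
        rw [key]
        exact div_nonpos_of_nonpos_of_nonneg (neg_nonpos.2 (sq_nonneg _)) (by positivity)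
      calc Real.exp (t*x) * ((Real.sqrt (2*Real.pi*u))⁻¹ * Real.exp (-(x-m)^2/(2*u)))
          = (Real.sqrt (2*Real.pi*u))⁻¹ * Real.exp (-(x-m)^2/(2*u) + t*x) := by
            rw [Real.exp_add]; ring
        _ ≤ (Real.sqrt (2*Real.pi*u))⁻¹ * Real.exp (A + -(4*u)⁻¹*x^2) := by
            exact mul_le_mul_of_nonneg_left (Real.exp_le_exp.2 hineq) (by positivity)
        _ = ((Real.sqrt (2*Real.pi*u))⁻¹ * Real.exp A) * Real.exp (-(4*u)⁻¹*x^2) := by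
            rw [Real.exp_add]; ring


/-- the budget function `g(ν) = E[ξ X̲_λ(νξ, Y)]` of the concavified
problem satisfies `g(0+) = +∞` and `g(+∞) = 0`, where
`X̲_λ(νξ,Y) = [(νξ/γ)^{1/(γ-1)} + Y]·1_{νξ < f_λ(Y)}` and `f_λ(y) = d y^{γ-1}`
(with the convention `f_λ(0) = +∞`, so the indicator is `1` on `{Y = 0}`). -/
theorem stmt_15 {Ω : Type*} [MeasurableSpace Ω] (P : Measure Ω) [IsProbabilityMeasure P]
    (ξ Y : Ω → ℝ) (γ d lam : ℝ)
    (hγ0 : 0 < γ) (hγ1 : γ < 1) (hd : 0 < d) (hlam : 0 ≤ lam)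
    (hξmeas : Measurable ξ) (hξpos : ∀ ω, 0 < ξ ω)
    (m : ℝ) (v : NNReal)
    (hlognormal : Measure.map (fun ω => Real.log (ξ ω)) P = gaussianReal m v)
    (hYmeas : Measurable Y) (hYpos : ∀ ω, 0 ≤ Y ω)
    (hYnontriv : 0 < P {ω | 0 < Y ω})
    (hYint : Integrable (fun ω => Y ω ^ γ * ξ ω) P)
    (g : ℝ → ℝ)
    (hg : ∀ ν : ℝ, g ν = ∫ ω, ξ ω *
        (((ν * ξ ω / γ) ^ (1 / (γ - 1)) + Y ω) *
          (if ν * ξ ω < d * Y ω ^ (γ - 1) ∨ Y ω = 0 then 1 else 0)) ∂P) :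
    Filter.Tendsto g (nhdsWithin 0 (Set.Ioi 0)) Filter.atTop ∧
    Filter.Tendsto g Filter.atTop (nhds 0) := by
  have hγne : γ - 1 ≠ 0 := by intro h; linarith
  set r : ℝ := 1 / (γ - 1) with hr
  have hrneg : r < 0 := div_neg_of_pos_of_neg one_pos (by linarith)
  set b : ℝ := 1 + r with hb
  -- integrability of all powers of ξ
  have hint : ∀ c : ℝ, Integrable (fun ω => ξ ω ^ c) P := by
    intro c
    have hcomp : (fun ω => ξ ω ^ c) = (fun x => Real.exp (c * x)) ∘ (fun ω => Real.log (ξ ω)) := by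
      funext ω
      simp only [Function.comp]
      rw [Real.rpow_def_of_pos (hξpos ω), mul_comm]
    rw [hcomp]
    have h := aux_integrable_exp_gaussian m v c
    rw [← hlognormal] at h
    exact h.comp_measurable hξmeas.log
  -- the indicator
  set χ : ℝ → Ω → ℝ := fun ν ω => if ν * ξ ω < d * Y ω ^ (γ - 1) ∨ Y ω = 0 then 1 else 0 with hχdef
  set F : ℝ → Ω → ℝ := fun ν ω => ξ ω * (((ν * ξ ω / γ) ^ r + Y ω) * χ ν ω) with hFdef
  have hgF : ∀ ν, g ν = ∫ ω, F ν ω ∂P := hg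
  have hχ01 : ∀ ν ω, 0 ≤ χ ν ω ∧ χ ν ω ≤ 1 := by
    intro ν ω; simp only [hχdef]; split_ifs <;> norm_num
  have hAmeas : ∀ ν : ℝ, MeasurableSet {ω | ν * ξ ω < d * Y ω ^ (γ - 1) ∨ Y ω = 0} := by
    intro ν
    have h1 : MeasurableSet {ω | ν * ξ ω < d * Y ω ^ (γ - 1)} :=
      measurableSet_lt (by fun_prop) (by fun_prop)
    have h2 : MeasurableSet {ω | Y ω = 0} := hYmeas (measurableSet_singleton 0)
    rw [Set.setOf_or]
    exact h1.union h2
  have hχmeas : ∀ ν, Measurable (χ ν) := fun ν =>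
    Measurable.ite (hAmeas ν) measurable_const measurable_const
  have hFmeas : ∀ ν, Measurable (F ν) := by
    intro ν
    apply hξmeas.mul
    exact (((by fun_prop : Measurable fun ω => (ν * ξ ω / γ) ^ r).add hYmeas).mul (hχmeas ν))
  -- rewriting ξ * (ν ξ / γ)^r
  have hkey : ∀ c : ℝ, 0 < c → ∀ ω, ξ ω * (c * ξ ω / γ) ^ r = (c / γ) ^ r * ξ ω ^ b := by
    intro c hc ω
    have h1 : c * ξ ω / γ = (c / γ) * ξ ω := by ring
    rw [h1, Real.mul_rpow (by positivity) (hξpos ω).le, hb, Real.rpow_add (hξpos ω),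
      Real.rpow_one]
    ring
  -- nonnegativity of F
  have hFnn : ∀ ν : ℝ, 0 < ν → ∀ ω, 0 ≤ F ν ω := by
    intro ν hν ω
    simp only [hFdef]
    have h1 : (0:ℝ) ≤ (ν * ξ ω / γ) ^ r :=
      Real.rpow_nonneg (div_nonneg (mul_nonneg hν.le (hξpos ω).le) hγ0.le) _
    exact mul_nonneg (hξpos ω).le (mul_nonneg (add_nonneg h1 (hYpos ω)) (hχ01 ν ω).1)
  -- upper bound
  have hFle : ∀ ν : ℝ, 0 < ν → ∀ ω, F ν ω ≤ ((ν/γ)^r + (ν/d)^r) * ξ ω ^ b := by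
    intro ν hν ω
    have hξb : (0:ℝ) < ξ ω ^ b := Real.rpow_pos_of_pos (hξpos ω) _
    have hRHSnn : (0:ℝ) ≤ ((ν/γ)^r + (ν/d)^r) * ξ ω ^ b := by
      have := Real.rpow_nonneg (by positivity : (0:ℝ) ≤ ν/γ) r
      have := Real.rpow_nonneg (by positivity : (0:ℝ) ≤ ν/d) r
      positivity
    simp only [hFdef, hχdef]
    split_ifs with h
    · rw [mul_one]
      have e1 : ξ ω * ((ν * ξ ω / γ) ^ r + Y ω)
          = ξ ω * (ν * ξ ω / γ) ^ r + ξ ω * Y ω := by ring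
      rw [e1, hkey ν hν ω, add_mul]
      refine add_le_add le_rfl ?_
      rcases h with h | h
      · rcases eq_or_lt_of_le (hYpos ω) with h0 | h0
        · rw [← h0, mul_zero]
          have := Real.rpow_nonneg (by positivity : (0:ℝ) ≤ ν/d) r
          positivity
        · have hYr : (0:ℝ) < Y ω ^ (γ - 1) := Real.rpow_pos_of_pos h0 _
          have h2 : ν * ξ ω / d < Y ω ^ (γ - 1) := by
            rw [div_lt_iff₀ hd]; linarith [h]
          have h3 : (Y ω ^ (γ - 1)) ^ r < (ν * ξ ω / d) ^ r :=
            Real.rpow_lt_rpow_of_neg (div_pos (mul_pos hν (hξpos ω)) hd) h2 hrneg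
          have h4 : (Y ω ^ (γ - 1)) ^ r = Y ω := by
            rw [← Real.rpow_mul h0.le]
            have : (γ - 1) * r = 1 := by rw [hr]; field_simp
            rw [this, Real.rpow_one]
          have h5 : (ν * ξ ω / d) ^ r = (ν/d) ^ r * ξ ω ^ r := by
            rw [show ν * ξ ω / d = (ν/d) * ξ ω by ring,
              Real.mul_rpow (by positivity) (hξpos ω).le]
          have h6 : Y ω ≤ (ν/d) ^ r * ξ ω ^ r := by rw [← h5, ← h4]; exact h3.le
          calc ξ ω * Y ω ≤ ξ ω * ((ν/d) ^ r * ξ ω ^ r) :=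
                mul_le_mul_of_nonneg_left h6 (hξpos ω).le
            _ = (ν/d) ^ r * ξ ω ^ b := by
                rw [hb, Real.rpow_add (hξpos ω), Real.rpow_one]; ring
      · rw [h, mul_zero]
        have := Real.rpow_nonneg (by positivity : (0:ℝ) ≤ ν/d) r
        positivity
    · rw [mul_zero, mul_zero]
      exact hRHSnn
  -- integrability of F
  have hFint : ∀ ν : ℝ, 0 < ν → Integrable (F ν) P := by
    intro ν hν
    refine ((hint b).const_mul ((ν/γ)^r + (ν/d)^r)).mono'
      (hFmeas ν).aestronglyMeasurable (ae_of_all _ fun ω => ?_)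
    rw [Real.norm_eq_abs, abs_of_nonneg (hFnn ν hν ω)]
    exact hFle ν hν ω
  constructor
  · -- ν → 0+
    set E : ℕ → Set Ω := fun n => {ω | Y ω = 0 ∨ ξ ω ≤ n * (d * Y ω ^ (γ - 1))} with hEdef
    have hEmeas : ∀ n, MeasurableSet (E n) := by
      intro n
      simp only [hEdef]
      rw [Set.setOf_or]
      exact (hYmeas (measurableSet_singleton 0)).union
        (measurableSet_le (by fun_prop) (by fun_prop))
    have hEex : ∃ n, P (E n) ≠ 0 := by
      by_contra hcon
      push_neg at hcon
      have hnull : P (⋃ n, E n) = 0 := measure_iUnion_null hcon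
      have huniv : (⋃ n, E n) = Set.univ := by
        ext ω
        simp only [Set.mem_iUnion, Set.mem_univ, iff_true, hEdef, Set.mem_setOf_eq]
        by_cases hY : Y ω = 0
        · exact ⟨0, Or.inl hY⟩
        · have hY0 : 0 < Y ω := lt_of_le_of_ne (hYpos ω) (Ne.symm hY)
          have hpos : 0 < d * Y ω ^ (γ - 1) := mul_pos hd (Real.rpow_pos_of_pos hY0 _)
          obtain ⟨n, hn⟩ := exists_nat_ge (ξ ω / (d * Y ω ^ (γ - 1)))
          refine ⟨n, Or.inr ?_⟩
          have := (div_le_iff₀ hpos).1 hn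
          linarith
      rw [huniv] at hnull
      simp [measure_univ] at hnull
    obtain ⟨n, hn⟩ := hEex
    set c : ℝ := ∫ ω in E n, ξ ω ^ b ∂P with hc
    have hcpos : 0 < c := by
      rw [hc]
      rw [setIntegral_pos_iff_support_of_nonneg_ae
        (ae_of_all _ fun ω => (Real.rpow_pos_of_pos (hξpos ω) b).le)
        ((hint b).integrableOn)]
      have hsupp : (Function.support fun ω => ξ ω ^ b) = Set.univ := by
        ext ω
        simp [Function.mem_support, (Real.rpow_pos_of_pos (hξpos ω) b).ne']
      rw [hsupp, Set.univ_inter]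
      exact (hn : P (E n) ≠ 0).bot_lt
    -- the lower bound
    have hlow : ∀ ν : ℝ, 0 < ν → ν * n < 1 → (ν/γ)^r * c ≤ g ν := by
      intro ν hν hνn
      have hχ1 : ∀ ω ∈ E n, χ ν ω = 1 := by
        intro ω hω
        simp only [hχdef, if_pos]
        rw [if_pos]
        rcases hω with hY | hle
        · exact Or.inr hY
        · left
          by_cases hY : Y ω = 0
          · exfalso
            rw [hY, Real.zero_rpow hγne] at hle
            simp at hle
            linarith [hξpos ω]
          · have hY0 : 0 < Y ω := lt_of_le_of_ne (hYpos ω) (Ne.symm hY)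
            have hpos : 0 < d * Y ω ^ (γ - 1) := mul_pos hd (Real.rpow_pos_of_pos hY0 _)
            calc ν * ξ ω ≤ ν * (n * (d * Y ω ^ (γ - 1))) :=
                  mul_le_mul_of_nonneg_left hle hν.le
              _ = (ν * n) * (d * Y ω ^ (γ - 1)) := by ring
              _ < 1 * (d * Y ω ^ (γ - 1)) := mul_lt_mul_of_pos_right hνn hpos
              _ = d * Y ω ^ (γ - 1) := one_mul _
      have hlower_fun : ∀ ω, (E n).indicator (fun ω => (ν/γ)^r * ξ ω ^ b) ω ≤ F ν ω := by
        intro ω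
        by_cases hω : ω ∈ E n
        · rw [Set.indicator_of_mem hω]
          have hFeq : F ν ω = (ν/γ)^r * ξ ω ^ b + ξ ω * Y ω := by
            simp only [hFdef]
            rw [hχ1 ω hω, mul_one]
            have e1 : ξ ω * ((ν * ξ ω / γ) ^ r + Y ω)
                = ξ ω * (ν * ξ ω / γ) ^ r + ξ ω * Y ω := by ring
            rw [e1, hkey ν hν ω]
          rw [hFeq]
          have : 0 ≤ ξ ω * Y ω := mul_nonneg (hξpos ω).le (hYpos ω)
          linarith
        · rw [Set.indicator_of_notMem hω]
          exact hFnn ν hν ω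
      have hint1 : Integrable ((E n).indicator (fun ω => (ν/γ)^r * ξ ω ^ b)) P :=
        ((hint b).const_mul _).indicator (hEmeas n)
      have hstep : ∫ ω, (E n).indicator (fun ω => (ν/γ)^r * ξ ω ^ b) ω ∂P ≤ ∫ ω, F ν ω ∂P :=
        integral_mono_of_nonneg
          (ae_of_all _ fun ω => Set.indicator_nonneg
            (fun x _ => mul_nonneg (Real.rpow_nonneg (by positivity) r)
              (Real.rpow_pos_of_pos (hξpos x) b).le) ω)
          (hFint ν hν) (ae_of_all _ hlower_fun)
      have heval : ∫ ω, (E n).indicator (fun ω => (ν/γ)^r * ξ ω ^ b) ω ∂P = (ν/γ)^r * c := by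
        rw [integral_indicator (hEmeas n), hc, integral_const_mul]
      rw [hgF ν]
      rw [heval] at hstep
      exact hstep
    -- tendsto
    have htend : Tendsto (fun ν : ℝ => (ν/γ)^r * c) (nhdsWithin 0 (Set.Ioi 0)) atTop := by
      have hdiv : Tendsto (fun ν : ℝ => ν / γ) (nhdsWithin 0 (Set.Ioi 0))
          (nhdsWithin 0 (Set.Ioi 0)) := by
        apply tendsto_nhdsWithin_of_tendsto_nhds_of_eventually_within
        · have h0 : Tendsto (fun ν : ℝ => ν / γ) (nhds 0) (nhds (0 / γ)) :=
            (continuous_id.div_const γ).tendsto 0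
          rw [zero_div] at h0
          exact h0.mono_left nhdsWithin_le_nhds
        · filter_upwards [self_mem_nhdsWithin] with x hx
          exact div_pos hx hγ0
      have hinv : Tendsto (fun x : ℝ => (x⁻¹) ^ (-r)) (nhdsWithin 0 (Set.Ioi 0)) atTop :=
        (tendsto_rpow_atTop (by linarith : (0:ℝ) < -r)).comp tendsto_inv_nhdsGT_zero
      have hpow : Tendsto (fun x : ℝ => x ^ r) (nhdsWithin 0 (Set.Ioi 0)) atTop := by
        refine hinv.congr' ?_
        filter_upwards [self_mem_nhdsWithin] with x hx
        have hx0 : (0:ℝ) < x := hx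
        rw [Real.inv_rpow hx0.le, ← Real.rpow_neg hx0.le, neg_neg]
      exact ((hpow.comp hdiv).atTop_mul_const hcpos)
    refine tendsto_atTop_mono' _ ?_ htend
    have hsmall : ∀ᶠ ν : ℝ in nhdsWithin 0 (Set.Ioi 0), ν * n < 1 := by
      have hmul : Tendsto (fun ν : ℝ => ν * n) (nhdsWithin 0 (Set.Ioi 0)) (nhds 0) := by
        have h0 : Tendsto (fun ν : ℝ => ν * n) (nhds 0) (nhds (0 * n)) :=
          (continuous_mul_right (n:ℝ)).tendsto 0
        rw [zero_mul] at h0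
        exact h0.mono_left nhdsWithin_le_nhds
      exact hmul.eventually_lt_const one_pos
    filter_upwards [hsmall, self_mem_nhdsWithin] with ν h1 h2
    exact hlow ν h2 h1
  · -- ν → ∞
    set M : ℝ := ∫ ω, ξ ω ^ b ∂P with hM
    have hgle : ∀ ν : ℝ, 0 < ν → g ν ≤ ((ν/γ)^r + (ν/d)^r) * M := by
      intro ν hν
      rw [hgF]
      calc (∫ ω, F ν ω ∂P) ≤ ∫ ω, ((ν/γ)^r + (ν/d)^r) * ξ ω ^ b ∂P :=
            integral_mono_of_nonneg (ae_of_all _ (hFnn ν hν)) ((hint b).const_mul _)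
              (ae_of_all _ (hFle ν hν))
        _ = ((ν/γ)^r + (ν/d)^r) * M := integral_const_mul _ _
    have hto : ∀ c : ℝ, 0 < c → Tendsto (fun ν : ℝ => (ν/c)^r) atTop (nhds 0) := by
      intro c hc
      have h1 : Tendsto (fun x : ℝ => x ^ (-(-r))) atTop (nhds 0) :=
        tendsto_rpow_neg_atTop (by linarith)
      simp only [neg_neg] at h1
      exact h1.comp (tendsto_id.atTop_div_const hc)
    have hK : Tendsto (fun ν : ℝ => ((ν/γ)^r + (ν/d)^r) * M) atTop (nhds 0) := by
      have := ((hto γ hγ0).add (hto d hd)).mul_const M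
      simpa using this
    refine squeeze_zero' ?_ ?_ hK
    · filter_upwards [eventually_gt_atTop (0:ℝ)] with ν hν
      rw [hgF]
      exact integral_nonneg (hFnn ν hν)
    · filter_upwards [eventually_gt_atTop (0:ℝ)] with ν hν
      exact hgle ν hν
end
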